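/- Let q be a prime power and G ≤ PGL₂(F_q) a non-cyclic subgroup. If f ∈ F_q[x] is a monic irreducible polynomial of degree n ≥ 2 such that f is [A]-invariant for every [A] ∈ G, then n = 2, i.e., f is a quadratic polynomial. -/

import Mathlib

/-!
Let `α` be a root of `f` in `K = F[X] ⧸ (f)`. Since `(A ∘ f)(x) = (b x + d)ⁿ f((a x + c) / (b x + d))`
and `[A] ∘ f = f` makes `A ∘ f` a multiple of `f`, every `A` with `[A] ∈ G` sends `α` to another
root `(a α + c) / (b α + d)` of `f`, hence induces an automorphism of `K / F`. This is a group
homomorphism from the preimage of `G` in `GL₂(F)` to the cyclic group `Gal(K / F)`. If `A` acts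
trivially, `α` is a root of `b X² + (d - a) X - c`; for `n ≥ 3` this quadratic must vanish, so `A`
is scalar. Thus `G` is a quotient of a subgroup of a cyclic group, hence cyclic.
-/

open Polynomial

noncomputable section

namespace PGLAct

variable {F : Type} [Field F]

/-- The composition `A ∘ f = ∑ aᵢ (a x + c)^i (b x + d)^{k-i}` for `A = [[a,b],[c,d]]`. -/
def mcirc (A : Matrix (Fin 2) (Fin 2) F) (f : F[X]) : F[X] :=
  ∑ i ∈ Finset.range (f.natDegree + 1),
    C (f.coeff i) * (C (A 0 0) * X + C (A 1 0)) ^ i *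
      (C (A 0 1) * X + C (A 1 1)) ^ (f.natDegree - i)

/-- The composition `[A] ∘ f`: the monic normalization of `A ∘ f`. -/
def pcirc (A : Matrix (Fin 2) (Fin 2) F) (f : F[X]) : F[X] :=
  C (mcirc A f).leadingCoeff⁻¹ * mcirc A f

/-- The subgroup of scalar matrices in `GL₂(F)`. -/
def scalarSub (F : Type) [Field F] : Subgroup (GL (Fin 2) F) :=
  (Units.map ((Matrix.scalar (Fin 2)).toMonoidHom : F →* Matrix (Fin 2) (Fin 2) F)).range

instance scalarSub_normal (F : Type) [Field F] : (scalarSub F).Normal := by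
  constructor
  intro n hn g
  obtain ⟨u, hu⟩ := hn
  refine ⟨u, ?_⟩
  ext : 1
  have hcomm : Commute ((Matrix.scalar (Fin 2)) (u : F)) (g : Matrix (Fin 2) (Fin 2) F) :=
    Matrix.scalar_commute _ (fun r' => Commute.all _ r') _
  have hval : (n : Matrix (Fin 2) (Fin 2) F) = (Matrix.scalar (Fin 2)) (u : F) := by
    rw [← hu]; rfl
  calc ((Units.map ((Matrix.scalar (Fin 2)).toMonoidHom : F →* Matrix (Fin 2) (Fin 2) F)) u :
        GL (Fin 2) F).val
      = (Matrix.scalar (Fin 2)) (u : F) := rfl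
    _ = (g : Matrix (Fin 2) (Fin 2) F) * (Matrix.scalar (Fin 2)) (u : F)
        * ((g⁻¹ : GL (Fin 2) F) : Matrix (Fin 2) (Fin 2) F) := by
        rw [← hcomm.eq, mul_assoc, ← Units.val_mul, mul_inv_cancel]
        simp
    _ = ((g * n * g⁻¹ : GL (Fin 2) F) : Matrix (Fin 2) (Fin 2) F) := by
        simp [Units.val_mul, hval]

/-- `PGL₂(F)`, the projective general linear group. -/
def PGL2 (F : Type) [Field F] : Type := GL (Fin 2) F ⧸ scalarSub F

instance : Group (PGL2 F) := inferInstanceAs (Group (GL (Fin 2) F ⧸ scalarSub F))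

/-- The natural projection `GL₂(F) → PGL₂(F)`, `A ↦ [A]`. -/
def toPGL (F : Type) [Field F] : GL (Fin 2) F →* PGL2 F := QuotientGroup.mk' (scalarSub F)

/-- The polynomial `F_{A,r} = b x^{q^r+1} - a x^{q^r} + d x - c`. -/
def FAr [Fintype F] (A : Matrix (Fin 2) (Fin 2) F) (r : ℕ) : F[X] :=
  C (A 0 1) * X ^ (Fintype.card F ^ r + 1) - C (A 0 0) * X ^ (Fintype.card F ^ r)
    + C (A 1 1) * X - C (A 1 0)


/-- The σ-product of `A = [[a,b],[c,d]]` and `A₀ = [[a₀,b₀],[c₀,d₀]]`. -/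
def sigmaProd (A A0 : Matrix (Fin 2) (Fin 2) F) : Matrix (Fin 2) (Fin 2) F :=
  !![-(A 0 1 * (A0 0 0 * A0 1 0) - A 0 0 * (A0 0 0 * A0 1 1) + A 1 1 * (A0 1 0 * A0 0 1)
        - A 1 0 * (A0 0 1 * A0 1 1)),
     A 0 1 * A0 0 0 ^ 2 - A 0 0 * (A0 0 0 * A0 0 1) + A 1 1 * (A0 0 0 * A0 0 1)
        - A 1 0 * A0 0 1 ^ 2;
     -(A 0 1 * A0 1 0 ^ 2 - A 0 0 * (A0 1 0 * A0 1 1) + A 1 1 * (A0 1 1 * A0 1 0)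
        - A 1 0 * A0 1 1 ^ 2),
     A 0 1 * (A0 0 0 * A0 1 0) - A 0 0 * (A0 1 0 * A0 0 1) + A 1 1 * (A0 1 1 * A0 0 0)
        - A 1 0 * (A0 0 1 * A0 1 1)]

end PGLAct


lemma isCyclic_of_surjective_of_ker_le {H A B : Type*} [Group H] [Group A] [Group B] [IsCyclic A]
    (ρ : H →* A) (φ : H →* B) (hφ : Function.Surjective φ) (hker : ρ.ker ≤ φ.ker) :
    IsCyclic B :=
  have : IsCyclic (H ⧸ ρ.ker) :=
    isCyclic_of_surjective (QuotientGroup.quotientKerEquivRange ρ).symm (MulEquiv.surjective _)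
  isCyclic_of_surjective _ (QuotientGroup.lift_surjective_of_surjective _ φ hφ hker)

namespace PGLAct

variable {F K L : Type} [Field F] [Field K] [Algebra F K] [Field L] [Algebra F L]

/-- For `M = [[a,b],[c,d]]` this is `x ↦ (a x + c) / (b x + d)`, the substitution in `mcirc`. -/
def mobius (M : Matrix (Fin 2) (Fin 2) F) (x : K) : K :=
  (algebraMap F K (M 0 0) * x + algebraMap F K (M 1 0)) /
    (algebraMap F K (M 0 1) * x + algebraMap F K (M 1 1))

lemma mobius_one (x : K) : mobius (1 : Matrix (Fin 2) (Fin 2) F) x = x := by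
  simp [mobius]

lemma map_mobius (χ : K →ₐ[F] L) (M : Matrix (Fin 2) (Fin 2) F) (x : K) :
    χ (mobius M x) = mobius M (χ x) := by
  simp only [mobius, map_div₀, map_add, map_mul, AlgHom.commutes]

lemma mobius_mobius (A B : Matrix (Fin 2) (Fin 2) F) {x : K}
    (hx : algebraMap F K (A 0 1) * x + algebraMap F K (A 1 1) ≠ 0) :
    mobius B (mobius A x) = mobius (A * B) x := by
  set v := algebraMap F K (A 0 1) * x + algebraMap F K (A 1 1)
  have hmul (r s : F) : algebraMap F K r * mobius A x + algebraMap F K s =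
      (algebraMap F K r * (algebraMap F K (A 0 0) * x + algebraMap F K (A 1 0))
        + algebraMap F K s * v) / v := by
    rw [mobius, mul_div_assoc', div_add' _ _ _ hx]
  rw [mobius, hmul, hmul, div_div_div_cancel_right₀ hx, mobius]
  simp only [v, Matrix.mul_apply, Fin.sum_univ_two, map_add, map_mul]
  ring

lemma mobius_denom_ne_zero (A : GL (Fin 2) F) {x : K} (hx : x ∉ Set.range (algebraMap F K)) :
    algebraMap F K ((A : Matrix (Fin 2) (Fin 2) F) 0 1) * x
      + algebraMap F K ((A : Matrix (Fin 2) (Fin 2) F) 1 1) ≠ 0 := by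
  set M := (A : Matrix (Fin 2) (Fin 2) F)
  intro h
  by_cases hb : M 0 1 = 0
  · have hd : M 1 1 = 0 := by simpa [hb] using h
    have hdet : IsUnit M.det := (Matrix.isUnit_iff_isUnit_det M).mp A.isUnit
    simp [Matrix.det_fin_two, hb, hd] at hdet
  · refine hx ⟨-(M 1 1) / M 0 1, ?_⟩
    rw [map_div₀, map_neg, div_eq_iff (by simpa using hb)]
    linear_combination -h

lemma aeval_mcirc (M : Matrix (Fin 2) (Fin 2) F) (f : F[X]) {x : K}
    (hx : algebraMap F K (M 0 1) * x + algebraMap F K (M 1 1) ≠ 0) :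
    aeval x (mcirc M f) =
      (algebraMap F K (M 0 1) * x + algebraMap F K (M 1 1)) ^ f.natDegree
        * aeval (mobius M x) f := by
  rw [mcirc, map_sum, aeval_eq_sum_range, Finset.mul_sum]
  refine Finset.sum_congr rfl fun i hi => ?_
  have hi : i ≤ f.natDegree := Nat.lt_succ_iff.mp (Finset.mem_range.mp hi)
  conv_rhs => rw [← Nat.sub_add_cancel hi, pow_add]
  simp only [map_mul, map_pow, map_add, aeval_C, aeval_X, Algebra.smul_def, mobius, div_pow]
  rw [mul_div_assoc', mul_div_assoc', eq_div_iff (pow_ne_zero i hx)]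
  ring

lemma aeval_mobius_eq_zero_of_pcirc_eq {f : F[X]} (hf : f ≠ 0) (M : Matrix (Fin 2) (Fin 2) F)
    (hM : pcirc M f = f) {x : K}
    (hx : algebraMap F K (M 0 1) * x + algebraMap F K (M 1 1) ≠ 0) (hfx : aeval x f = 0) :
    aeval (mobius M x) f = 0 := by
  have hmcirc : mcirc M f = C (mcirc M f).leadingCoeff * f := by
    have hl : (mcirc M f).leadingCoeff ≠ 0 := by
      intro h0
      rw [pcirc, h0, inv_zero, C_0, zero_mul] at hM
      exact hf hM.symm
    calc mcirc M f
        = C (mcirc M f).leadingCoeff * (C (mcirc M f).leadingCoeff⁻¹ * mcirc M f) := by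
          rw [← mul_assoc, ← C_mul, mul_inv_cancel₀ hl, C_1, one_mul]
      _ = C (mcirc M f).leadingCoeff * f := congrArg _ hM
  have h := aeval_mcirc M f hx
  rw [hmcirc, map_mul, hfx, mul_zero] at h
  exact (mul_eq_zero.mp h.symm).resolve_left (pow_ne_zero _ hx)

lemma mem_scalarSub_of_off_diag_eq_zero (A : GL (Fin 2) F)
    (hb : (A : Matrix (Fin 2) (Fin 2) F) 0 1 = 0) (hc : (A : Matrix (Fin 2) (Fin 2) F) 1 0 = 0)
    (had : (A : Matrix (Fin 2) (Fin 2) F) 1 1 = (A : Matrix (Fin 2) (Fin 2) F) 0 0) :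
    A ∈ scalarSub F := by
  set M := (A : Matrix (Fin 2) (Fin 2) F)
  have hdet : IsUnit M.det := (Matrix.isUnit_iff_isUnit_det M).mp A.isUnit
  have ha : M 0 0 ≠ 0 := by
    intro h0
    simp [Matrix.det_fin_two, hb, hc, had, h0] at hdet
  refine ⟨Units.mk0 (M 0 0) ha, Units.ext ?_⟩
  ext i j
  fin_cases i <;> fin_cases j <;> simp [M, hb, hc, had]

/-- A fixed point of `A` is a root of `b X² + (d - a) X - c`. -/
lemma mem_scalarSub_of_mobius_eq_self (A : GL (Fin 2) F) {x : K}
    (hx : 2 < (minpoly F x).natDegree) (hfix : mobius (A : Matrix (Fin 2) (Fin 2) F) x = x) :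
    A ∈ scalarSub F := by
  set M := (A : Matrix (Fin 2) (Fin 2) F)
  have hv := mobius_denom_ne_zero A (x := x) fun hr =>
    absurd (minpoly.natDegree_eq_one_iff.mpr hr) (by omega)
  set p : F[X] := C (M 0 1) * X ^ 2 + C (M 1 1 - M 0 0) * X - C (M 1 0)
  have hp : p = 0 := by
    by_contra hp0
    have hdvd := Polynomial.natDegree_le_of_dvd (minpoly.dvd F x (p := p) (by
      rw [mobius, div_eq_iff hv] at hfix
      simp only [p, map_add, map_sub, map_mul, map_pow, aeval_C, aeval_X]
      linear_combination -hfix)) hp0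
    have : p.natDegree ≤ 2 := by simp only [p]; compute_degree
    omega
  refine mem_scalarSub_of_off_diag_eq_zero A ?_ ?_ ?_
  · simpa [p] using congrArg (coeff · 2) hp
  · simpa [p] using congrArg (coeff · 0) hp
  · simpa [p, sub_eq_zero] using congrArg (coeff · 1) hp

section AdjoinRoot

open AdjoinRoot

variable {f : F[X]} [Fact (Irreducible f)]

lemma natDegree_minpoly_root : (minpoly F (root f)).natDegree = f.natDegree := by
  have hf : f ≠ 0 := (Fact.out : Irreducible f).ne_zero
  rw [minpoly_root hf, natDegree_mul_C (inv_ne_zero (leadingCoeff_ne_zero.mpr hf))]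

lemma root_notMem_range_algebraMap (hdeg : 2 ≤ f.natDegree) :
    root f ∉ Set.range (algebraMap F (AdjoinRoot f)) := fun h => by
  have := (minpoly.natDegree_eq_one_iff (A := F)).mpr h
  rw [natDegree_minpoly_root] at this
  omega

lemma aeval_mobius_root_eq_zero (hdeg : 2 ≤ f.natDegree) (A : GL (Fin 2) F)
    (hA : pcirc (A : Matrix (Fin 2) (Fin 2) F) f = f) :
    aeval (mobius (A : Matrix (Fin 2) (Fin 2) F) (root f)) f = 0 :=
  aeval_mobius_eq_zero_of_pcirc_eq (Fact.out : Irreducible f).ne_zero _ hA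
    (mobius_denom_ne_zero A (root_notMem_range_algebraMap hdeg)) (by rw [aeval_eq, mk_self])

def mobiusAlgHom (hdeg : 2 ≤ f.natDegree) (A : GL (Fin 2) F)
    (hA : pcirc (A : Matrix (Fin 2) (Fin 2) F) f = f) : AdjoinRoot f →ₐ[F] AdjoinRoot f :=
  liftAlgHom f (Algebra.ofId F _) _ (aeval_mobius_root_eq_zero hdeg A hA)

lemma mobiusAlgHom_root (hdeg : 2 ≤ f.natDegree) (A : GL (Fin 2) F)
    (hA : pcirc (A : Matrix (Fin 2) (Fin 2) F) f = f) :
    mobiusAlgHom hdeg A hA (root f) = mobius (A : Matrix (Fin 2) (Fin 2) F) (root f) :=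
  liftAlgHom_root _ _ _ _

variable (f) in
def mobiusHom (H : Subgroup (GL (Fin 2) F)) (hdeg : 2 ≤ f.natDegree)
    (hH : ∀ A ∈ H, pcirc (A : Matrix (Fin 2) (Fin 2) F) f = f) :
    H →* (AdjoinRoot f →ₐ[F] AdjoinRoot f) where
  toFun A := mobiusAlgHom hdeg A (hH A A.2)
  map_one' := algHom_ext <| by
    rw [mobiusAlgHom_root, OneMemClass.coe_one, Units.val_one, mobius_one]
    rfl
  map_mul' A B := algHom_ext <| by
    rw [AlgHom.mul_apply, mobiusAlgHom_root, mobiusAlgHom_root, map_mobius, mobiusAlgHom_root,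
      mobius_mobius _ _ (mobius_denom_ne_zero _ (root_notMem_range_algebraMap hdeg))]
    rfl

lemma mem_scalarSub_of_mobiusHom_eq_one (hdeg : 2 < f.natDegree) {H : Subgroup (GL (Fin 2) F)}
    {hH : ∀ A ∈ H, pcirc (A : Matrix (Fin 2) (Fin 2) F) f = f} {A : H}
    (hA : mobiusHom f H hdeg.le hH A = 1) : (A : GL (Fin 2) F) ∈ scalarSub F := by
  refine mem_scalarSub_of_mobius_eq_self _ (x := root f) (by rwa [natDegree_minpoly_root]) ?_
  rw [← mobiusAlgHom_root hdeg.le _ (hH A A.2)]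
  exact DFunLike.congr_fun hA (root f)

end AdjoinRoot

end PGLAct

theorem noncyclic_invariant_is_quadratic_general {F : Type} [Field F] [Fintype F]
    (G : Subgroup (PGLAct.PGL2 F)) (hnc : ¬ IsCyclic G)
    (f : F[X]) (n : ℕ) (hirr : Irreducible f)
    (hdeg : f.natDegree = n) (hn : 2 ≤ n)
    (hinv : ∀ A : GL (Fin 2) F, PGLAct.toPGL F A ∈ G → PGLAct.pcirc A.val f = f) :
    n = 2 := by
  open PGLAct in
  by_contra hne
  have hgt : 2 < f.natDegree := by omega
  have : Fact (Irreducible f) := ⟨hirr⟩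
  have : Module.Finite F (AdjoinRoot f) := (AdjoinRoot.powerBasis hirr.ne_zero).finite
  have : Finite (AdjoinRoot f) := Module.finite_of_finite F
  let e := (Algebra.IsAlgebraic.algEquivEquivAlgHom F (AdjoinRoot f)).symm
  let ρ := e.toMonoidHom.comp (mobiusHom f (G.comap (toPGL F)) hgt.le hinv)
  refine hnc (isCyclic_of_surjective_of_ker_le ρ ((toPGL F).subgroupComap G)
    ((toPGL F).subgroupComap_surjective_of_surjective G (QuotientGroup.mk'_surjective _)) ?_)
  intro A hA
  have hscalar := mem_scalarSub_of_mobiusHom_eq_one hgt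
    (e.map_eq_one_iff.mp (MonoidHom.mem_ker.mp hA))
  exact MonoidHom.mem_ker.mpr (Subtype.ext ((QuotientGroup.eq_one_iff _).mpr hscalar))

/-- If `G ≤ PGL₂(F_q)` is non-cyclic and `f` is a monic irreducible of degree
`n ≥ 2` fixed by every element of `G`, then `n = 2`. -/
theorem noncyclic_invariant_is_quadratic {F : Type} [Field F] [Fintype F]
    (G : Subgroup (PGLAct.PGL2 F)) (hnc : ¬ IsCyclic G)
    (f : F[X]) (n : ℕ) (hf : f.Monic) (hirr : Irreducible f)
    (hdeg : f.natDegree = n) (hn : 2 ≤ n)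
    (hinv : ∀ A : GL (Fin 2) F, PGLAct.toPGL F A ∈ G → PGLAct.pcirc A.val f = f) :
    n = 2 :=
  noncyclic_invariant_is_quadratic_general G hnc f n hirr hdeg hn hinv
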